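/- arXiv:2508.09569 — 2 statements merged into one kernel-verified Lean document; each statement's English description precedes it below -/
import Mathlib

section
/- Fix m ≥ 1, T > 0, Δt > 0 with m·Δt ≤ T, and α > 0. Over all vectors (Δt₁, …, Δt_m) with Δt_j ≥ Δt for every j and ∑_j Δt_j = T, the sum g₁(t) = ∑_{j=1}^m (αΔt_j)²·ψ₁(αΔt_j) attains its minimum at the equal-spacing vector Δt_j = T/m for all j, and attains its maximum at any permutation of (T − (m−1)Δt, Δt, …, Δt). -/
set_option maxHeartbeats 1000000

noncomputable def trigamma (x : ℝ) : ℝ := ∑' v : ℕ, 1 / (x + v) ^ 2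

noncomputable def tetragamma (x : ℝ) : ℝ := -2 * ∑' v : ℕ, 1 / (x + v) ^ 3

open Filter Topology Set

set_option maxHeartbeats 1000000

noncomputable def Phi15 (x u : ℝ) : ℝ :=
  1/u - 2*x/u^2 + (x^2 - 1/12)/u^3 + (x/2)/u^4 - (x^2/2 + x/4)/u^5

lemma Phi15_eq (x u : ℝ) (hu : u ≠ 0) :
    Phi15 x u = (u^4 - 2*x*u^3 + (x^2 - 1/12)*u^2 + (x/2)*u - (x^2/2 + x/4)) / u^5 := by
  unfold Phi15
  field_simp

lemma Phi15_base (x : ℝ) (hx : 0 < x) : 0 ≤ Phi15 x (x + 1/2) := by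
  have h1 : x + 1/2 ≠ 0 := by positivity
  rw [Phi15_eq x _ h1]
  have h : (x + 1/2)^4 - 2*x*(x + 1/2)^3 + (x^2 - 1/12)*(x + 1/2)^2 + (x/2)*(x + 1/2) -
      (x^2/2 + x/4) = (1/6) * (x + 1/2)^2 := by ring
  rw [h]
  positivity

lemma key_ineq (x r : ℝ) (hx : 0 < x) (hr : 0 ≤ r) :
    2 * (Phi15 x (x + 1/2 + r) - Phi15 x (x + 1/2 + r + 1)) ≤
      2 * (r+1) * ((r+1) - 2*x) / (x + r + 1)^4 := by
  have h1 : (0:ℝ) < x + 1/2 + r := by linarith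
  have h2 : (0:ℝ) < x + 1/2 + r + 1 := by linarith
  have h3 : (0:ℝ) < x + r + 1 := by linarith
  set a := x + 1/2 + r with ha
  set b := x + 1/2 + r + 1 with hb
  rw [Phi15_eq x a h1.ne', Phi15_eq x b h2.ne']
  rw [div_sub_div _ _ (by positivity : a^5 ≠ (0:ℝ)) (by positivity : b^5 ≠ (0:ℝ))]
  rw [mul_div_assoc']
  rw [div_le_div_iff₀ (by positivity) (by positivity)]
  have hN : 2 * (r+1) * ((r+1) - 2*x) * (a^5 * b^5) -
      2 * ((a^4 - 2*x*a^3 + (x^2 - 1/12)*a^2 + (x/2)*a - (x^2/2 + x/4)) * b^5 -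
        a^5 * (b^4 - 2*x*b^3 + (x^2 - 1/12)*b^2 + (x/2)*b - (x^2/2 + x/4))) * (x + r + 1)^4 =
      ((225) + (2154) * r^1 + (8773) * r^2 + (19856) * r^3 + (27332) * r^4 + (23456) * r^5 + (12272) * r^6 + (3584) * r^7 + (448) * r^8 + (4470) * x^1 + (32198) * x^1 * r^1 + (103680) * x^1 * r^2 + (195680) * x^1 * r^3 + (237328) * x^1 * r^4 + (189408) * x^1 * r^5 + (96896) * x^1 * r^6 + (28928) * x^1 * r^7 + (3840) * x^1 * r^8 + (31612) * x^2 + (199032) * x^2 * r^1 + (555996) * x^2 * r^2 + (897344) * x^2 * r^3 + (902688) * x^2 * r^4 + (562560) * x^2 * r^5 + (199360) * x^2 * r^6 + (30720) * x^2 * r^7 + (115208) * x^3 + (634280) * x^3 * r^1 + (1502624) * x^3 * r^2 + (1962112) * x^3 * r^3 + (1484800) * x^3 * r^4 + (613760) * x^3 * r^5 + (107520) * x^3 * r^6 + (246632) * x^4 + (1145248) * x^4 * r^1 + (2180208) * x^4 * r^2 + (2126080) * x^4 * r^3 + (1059520) * x^4 * r^4 + (215040) * x^4 * r^5 + (326096)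 * x^5 + (1211424) * x^5 * r^1 + (1716864) * x^5 * r^2 + (1100288) * x^5 * r^3 + (268800) * x^5 * r^4 + (267776) * x^6 + (738176) * x^6 * r^1 + (685888) * x^6 * r^2 + (215040) * x^6 * r^3 + (131840) * x^7 + (237440) * x^7 * r^1 + (107520) * x^7 * r^2 + (35200) * x^8 + (30720) * x^8 * r^1 + (3840) * x^9) / 1536 := by
    rw [ha, hb]; ring
  have hpos : (0:ℝ) ≤ ((225) + (2154) * r^1 + (8773) * r^2 + (19856) * r^3 + (27332) * r^4 + (23456) * r^5 + (12272) * r^6 + (3584) * r^7 + (448) * r^8 + (4470) * x^1 + (32198) * x^1 * r^1 + (103680) * x^1 * r^2 + (195680) * x^1 * r^3 + (237328) * x^1 * r^4 + (189408) * x^1 * r^5 + (96896) * x^1 * r^6 + (28928) * x^1 * r^7 + (3840) * x^1 * r^8 + (31612) * x^2 + (199032) * x^2 * r^1 + (555996) * x^2 * r^2 + (897344) * x^2 * r^3 + (902688) * x^2 * r^4 + (562560) * x^2 * r^5 + (199360) * x^2 * r^6 + (30720) * x^2 * r^7 + (115208) * x^3 + (634280) * x^3 * r^1 + (1502624) * x^3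 * r^2 + (1962112) * x^3 * r^3 + (1484800) * x^3 * r^4 + (613760) * x^3 * r^5 + (107520) * x^3 * r^6 + (246632) * x^4 + (1145248) * x^4 * r^1 + (2180208) * x^4 * r^2 + (2126080) * x^4 * r^3 + (1059520) * x^4 * r^4 + (215040) * x^4 * r^5 + (326096) * x^5 + (1211424) * x^5 * r^1 + (1716864) * x^5 * r^2 + (1100288) * x^5 * r^3 + (268800) * x^5 * r^4 + (267776) * x^6 + (738176) * x^6 * r^1 + (685888) * x^6 * r^2 + (215040) * x^6 * r^3 + (131840) * x^7 + (237440) * x^7 * r^1 + (107520) * x^7 * r^2 + (35200) * x^8 + (30720) * x^8 * r^1 + (3840) * x^9) / 1536 := by positivity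
  linarith [hN, hpos]



-- telescoping sum of an antitone null sequence
lemma telescope_hasSum {q : ℕ → ℝ} (hq : ∀ n, q (n+1) ≤ q n)
    (h0 : Tendsto q atTop (𝓝 0)) : HasSum (fun n => q n - q (n+1)) (q 0) := by
  have hmono : Antitone q := antitone_nat_of_succ_le hq
  have hqnonneg : ∀ n, 0 ≤ q n := fun n =>
    le_of_tendsto' (h0.comp (tendsto_add_atTop_nat n)) (fun m => hmono (Nat.le_add_left n m))
  have hsummable : Summable (fun n => q n - q (n+1)) := by
    apply summable_of_sum_range_le (c := q 0) (fun n => sub_nonneg.2 (hq n))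
    intro n
    rw [Finset.sum_range_sub' q n]
    linarith [hqnonneg n]
  rw [hsummable.hasSum_iff_tendsto_nat]
  have : (fun n => ∑ i ∈ Finset.range n, (q i - q (i+1))) = fun n => q 0 - q n := by
    funext n; exact Finset.sum_range_sub' q n
  rw [this]
  simpa using tendsto_const_nhds.sub h0

-- inverse powers telescoping
lemma qpow_hasSum (c : ℝ) (hc : 0 < c) (k : ℕ) (hk : k ≠ 0) :
    HasSum (fun n : ℕ => ((c + n)^k)⁻¹ - ((c + (n+1))^k)⁻¹) ((c^k)⁻¹) := by
  have h := telescope_hasSum (q := fun n : ℕ => ((c + n)^k)⁻¹) ?_ ?_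
  · simpa using h
  · intro n
    have h1 : (0:ℝ) < c + n := by positivity
    have h2 : c + (n:ℝ) ≤ c + (n+1:ℕ) := by push_cast; linarith
    exact inv_anti₀ (by positivity) (pow_le_pow_left₀ h1.le h2 k)
  · apply Tendsto.inv_tendsto_atTop
    apply (tendsto_pow_atTop hk).comp
    exact tendsto_atTop_add_const_left _ _ tendsto_natCast_atTop_atTop

lemma summable_invsq (c : ℝ) (hc : 0 < c) : Summable (fun v : ℕ => ((c + v)^2)⁻¹) := by
  have hbase : Summable (fun v : ℕ => (((v:ℝ) + 1)^2)⁻¹) := by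
    have h := (summable_nat_add_iff (f := fun n : ℕ => ((n:ℝ)^2)⁻¹) 1).2
      (by simpa [one_div] using Real.summable_one_div_nat_pow.2 (le_refl 2))
    apply h.congr
    intro n; push_cast; ring
  apply Summable.of_nonneg_of_le (fun v => by positivity) _ (hbase.mul_left (((c+1)/c)^2))
  intro v
  have h1 : (0:ℝ) < c + v := by positivity
  have h2 : (0:ℝ) < (v:ℝ) + 1 := by positivity
  have he : ((c+1)/c)^2 * (((v:ℝ)+1)^2)⁻¹ = (c+1)^2 / (((v:ℝ)+1)^2 * c^2) := by
    field_simp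
  rw [he, inv_eq_one_div, div_le_div_iff₀ (by positivity) (by positivity)]
  nlinarith [sq_nonneg (c*(v:ℝ) - 1), mul_pos hc h2, sq_nonneg ((v:ℝ)*c),
    mul_nonneg (mul_nonneg hc.le (Nat.cast_nonneg v)) (Nat.cast_nonneg v)]




noncomputable def gg2 (v : ℕ) (x : ℝ) : ℝ := 2*v*((v:ℝ) - 2*x) / (x+v)^4

lemma gg2_bound (x : ℝ) (hx : 0 < x) (v : ℕ) : ‖gg2 v x‖ ≤ 6 * ((x + v)^2)⁻¹ := by
  have h1 : (0:ℝ) < x + v := by positivity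
  have hv : (0:ℝ) ≤ (v:ℝ) := Nat.cast_nonneg v
  have habs : ‖gg2 v x‖ = |2*v*((v:ℝ) - 2*x)| / (x+v)^4 := by
    rw [Real.norm_eq_abs, gg2, abs_div, abs_of_pos (pow_pos h1 4)]
  rw [habs]
  have h2 : |2*v*((v:ℝ) - 2*x)| ≤ 2*v*(v:ℝ) + 4*x*v := by
    rw [abs_le]; constructor <;> nlinarith [mul_nonneg hx.le hv]
  have h3 : (2*v*(v:ℝ) + 4*x*v) / (x+v)^4 ≤ 6 * ((x+v)^2)⁻¹ := by
    rw [inv_eq_one_div, ← mul_div_assoc, mul_one,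
      div_le_div_iff₀ (by positivity) (by positivity)]
    have hfact : 6*(x+↑v)^4 - (2*↑v*↑v + 4*x*↑v) * (x+↑v)^2
        = (x+↑v)^2 * (6*x^2 + 8*(x*↑v) + 4*↑v^2) := by ring
    nlinarith [mul_nonneg (sq_nonneg (x + (v:ℝ)))
      (by nlinarith [mul_nonneg hx.le hv] : (0:ℝ) ≤ 6*x^2 + 8*(x*↑v) + 4*↑v^2)]
  refine le_trans ?_ h3
  gcongr

lemma f2_nonneg (x : ℝ) (hx : 0 < x) : 0 ≤ ∑' v : ℕ, gg2 v x := by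
  have hc : (0:ℝ) < x + 1/2 := by linarith
  have h1 := (qpow_hasSum (x+1/2) hc 1 one_ne_zero).mul_left 2
  have h2 := (qpow_hasSum (x+1/2) hc 2 two_ne_zero).mul_left (-4*x)
  have h3 := (qpow_hasSum (x+1/2) hc 3 (by norm_num)).mul_left (2*x^2 - 1/6)
  have h4 := (qpow_hasSum (x+1/2) hc 4 (by norm_num)).mul_left x
  have h5 := (qpow_hasSum (x+1/2) hc 5 (by norm_num)).mul_left (-(x^2) - x/2)
  have hd := (((h1.add h2).add h3).add h4).add h5
  have hsumg : Summable (fun v : ℕ => gg2 v x) :=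
    Summable.of_norm_bounded ((summable_invsq x hx).mul_left 6) (gg2_bound x hx)
  have hshift : Summable (fun n : ℕ => gg2 (n+1) x) := by
    exact (summable_nat_add_iff 1).2 hsumg
  have hle : ∀ n : ℕ,
      2 * (((x+1/2 + (n:ℝ))^1)⁻¹ - ((x+1/2 + ((n:ℝ)+1))^1)⁻¹) +
        -4*x * (((x+1/2 + (n:ℝ))^2)⁻¹ - ((x+1/2 + ((n:ℝ)+1))^2)⁻¹) +
        (2*x^2 - 1/6) * (((x+1/2 + (n:ℝ))^3)⁻¹ - ((x+1/2 + ((n:ℝ)+1))^3)⁻¹) +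
        x * (((x+1/2 + (n:ℝ))^4)⁻¹ - ((x+1/2 + ((n:ℝ)+1))^4)⁻¹) +
        (-(x^2) - x/2) * (((x+1/2 + (n:ℝ))^5)⁻¹ - ((x+1/2 + ((n:ℝ)+1))^5)⁻¹)
        ≤ gg2 (n+1) x := by
    intro n
    have hk := key_ineq x n hx (Nat.cast_nonneg n)
    have he : 2 * (((x+1/2 + (n:ℝ))^1)⁻¹ - ((x+1/2 + ((n:ℝ)+1))^1)⁻¹) +
        -4*x * (((x+1/2 + (n:ℝ))^2)⁻¹ - ((x+1/2 + ((n:ℝ)+1))^2)⁻¹) +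
        (2*x^2 - 1/6) * (((x+1/2 + (n:ℝ))^3)⁻¹ - ((x+1/2 + ((n:ℝ)+1))^3)⁻¹) +
        x * (((x+1/2 + (n:ℝ))^4)⁻¹ - ((x+1/2 + ((n:ℝ)+1))^4)⁻¹) +
        (-(x^2) - x/2) * (((x+1/2 + (n:ℝ))^5)⁻¹ - ((x+1/2 + ((n:ℝ)+1))^5)⁻¹)
        = 2 * (Phi15 x (x + 1/2 + (n:ℝ)) - Phi15 x (x + 1/2 + (n:ℝ) + 1)) := by
      unfold Phi15
      ring
    rw [he]
    have hg : gg2 (n+1) x = 2 * ((n:ℝ)+1) * (((n:ℝ)+1) - 2*x) / (x + (n:ℝ) + 1)^4 := by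
      unfold gg2; push_cast; ring
    rw [hg]
    exact hk
  have hts := Summable.tsum_le_tsum hle hd.summable hshift
  rw [hd.tsum_eq] at hts
  have hval : 0 ≤ 2 * (((x+1/2)^1)⁻¹) + -4*x * (((x+1/2)^2)⁻¹) + (2*x^2 - 1/6) * (((x+1/2)^3)⁻¹)
      + x * (((x+1/2)^4)⁻¹) + (-(x^2) - x/2) * (((x+1/2)^5)⁻¹) := by
    have := Phi15_base x hx
    unfold Phi15 at this
    have he : 2 * (((x+1/2)^1)⁻¹) + -4*x * (((x+1/2)^2)⁻¹) + (2*x^2 - 1/6) * (((x+1/2)^3)⁻¹)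
      + x * (((x+1/2)^4)⁻¹) + (-(x^2) - x/2) * (((x+1/2)^5)⁻¹)
      = 2 * (1/(x+1/2) - 2*x/(x+1/2)^2 + (x^2 - 1/12)/(x+1/2)^3 + (x/2)/(x+1/2)^4
          - (x^2/2 + x/4)/(x+1/2)^5) := by ring
    rw [he]; linarith
  rw [Summable.tsum_eq_zero_add hsumg]
  have h0 : gg2 0 x = 0 := by simp [gg2]
  rw [h0, zero_add]
  exact le_trans hval hts



noncomputable def gg (v : ℕ) (x : ℝ) : ℝ := x^2 / (x+v)^2
noncomputable def gg1 (v : ℕ) (x : ℝ) : ℝ := 2*x*v / (x+v)^3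

lemma gg_hasDeriv (v : ℕ) (x : ℝ) (hx : 0 < x) : HasDerivAt (gg v) (gg1 v x) x := by
  have h1 : (0:ℝ) < x + v := by positivity
  have hnum : HasDerivAt (fun z : ℝ => z^2) (2*x) x := by
    simpa using hasDerivAt_pow 2 x
  have hden : HasDerivAt (fun z : ℝ => (z+(v:ℝ))^2) (2*(x+v)) x := by
    have := ((hasDerivAt_id x).add_const (v:ℝ)).pow 2
    simp at this; exact this
  have h := hnum.div hden (by positivity)
  refine h.congr_deriv ?_
  unfold gg1
  field_simp
  ring

lemma gg1_hasDeriv (v : ℕ) (x : ℝ) (hx : 0 < x) : HasDerivAt (gg1 v) (gg2 v x) x := by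
  have h1 : (0:ℝ) < x + v := by positivity
  have hnum : HasDerivAt (fun z : ℝ => 2*z*(v:ℝ)) (2*(v:ℝ)) x := by
    have := ((hasDerivAt_id x).const_mul (2:ℝ)).mul_const (v:ℝ)
    simpa using this
  have hden : HasDerivAt (fun z : ℝ => (z+(v:ℝ))^3) (3*(x+v)^2) x := by
    have := ((hasDerivAt_id x).add_const (v:ℝ)).pow 3
    simp [mul_comm] at this; rw [mul_comm]; exact this
  have h := hnum.div hden (by positivity)
  refine h.congr_deriv ?_
  unfold gg2
  field_simp
  ring

lemma gg1_bound (a b : ℝ) (ha : 0 < a) (v : ℕ) (y : ℝ) (hy : y ∈ Set.Ioo a b) :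
    ‖gg1 v y‖ ≤ 2*b * ((a+v)^2)⁻¹ := by
  obtain ⟨hay, hyb⟩ := hy
  have hv : (0:ℝ) ≤ v := Nat.cast_nonneg v
  have hy0 : 0 < y := lt_trans ha hay
  have h1 : (0:ℝ) < y + v := by positivity
  have h2 : (0:ℝ) < a + v := by positivity
  have habs : ‖gg1 v y‖ = 2*y*v / (y+v)^3 := by
    rw [Real.norm_eq_abs, gg1, abs_of_nonneg (by positivity)]
  rw [habs, inv_eq_one_div, ← mul_div_assoc, mul_one,
    div_le_div_iff₀ (by positivity) (by positivity)]
  have h3 : (a+v)^2 ≤ (y+v)^2 := by nlinarith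
  have h4 : y*v ≤ b*(y+v) := by nlinarith
  nlinarith [mul_le_mul h4 h3 (by positivity) (by nlinarith : (0:ℝ) ≤ b*(y+v))]

lemma gg2_bound' (a : ℝ) (ha : 0 < a) (v : ℕ) (y : ℝ) (hy : a < y) :
    ‖gg2 v y‖ ≤ 6 * ((a+v)^2)⁻¹ := by
  have hy0 : 0 < y := lt_trans ha hy
  refine le_trans (gg2_bound y hy0 v) ?_
  have h2 : (0:ℝ) < a + v := by positivity
  have h3 : (0:ℝ) < y + v := by positivity
  have : ((y+v)^2)⁻¹ ≤ ((a+v)^2)⁻¹ := by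
    apply inv_anti₀ (by positivity)
    nlinarith [Nat.cast_nonneg (α := ℝ) v]
  nlinarith

lemma summable_gg (x : ℝ) (hx : 0 < x) : Summable (fun v : ℕ => gg v x) := by
  apply ((summable_invsq x hx).mul_left (x^2)).congr
  intro v
  rw [gg, div_eq_mul_inv]

lemma summable_gg1 (x : ℝ) (hx : 0 < x) : Summable (fun v : ℕ => gg1 v x) := by
  apply Summable.of_norm_bounded ((summable_invsq (x/2) (by positivity)).mul_left (2*(x+1)))
  intro v
  exact gg1_bound (x/2) (x+1) (by positivity) v x ⟨by linarith, by linarith⟩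

lemma hasDerivAt_F1 (x : ℝ) (hx : 0 < x) :
    HasDerivAt (fun z : ℝ => ∑' v : ℕ, gg v z) (∑' v : ℕ, gg1 v x) x := by
  apply hasDerivAt_tsum_of_isPreconnected
    ((summable_invsq (x/2) (by positivity)).mul_left (2*(x+1)))
    isOpen_Ioo (isPreconnected_Ioo (a := x/2) (b := x+1))
    (fun v y hy => gg_hasDeriv v y (lt_trans (by positivity) hy.1))
    (fun v y hy => gg1_bound (x/2) (x+1) (by positivity) v y hy)
    (Set.mem_Ioo.2 ⟨by linarith, by linarith⟩)
    (summable_gg x hx)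
    (Set.mem_Ioo.2 ⟨by linarith, by linarith⟩)

lemma hasDerivAt_F2 (x : ℝ) (hx : 0 < x) :
    HasDerivAt (fun z : ℝ => ∑' v : ℕ, gg1 v z) (∑' v : ℕ, gg2 v x) x := by
  apply hasDerivAt_tsum_of_isPreconnected
    ((summable_invsq (x/2) (by positivity)).mul_left 6)
    isOpen_Ioo (isPreconnected_Ioo (a := x/2) (b := x+1))
    (fun v y hy => gg1_hasDeriv v y (lt_trans (by positivity) hy.1))
    (fun v y hy => gg2_bound' (x/2) (by positivity) v y hy.1)
    (Set.mem_Ioo.2 ⟨by linarith, by linarith⟩)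
    (summable_gg1 x hx)
    (Set.mem_Ioo.2 ⟨by linarith, by linarith⟩)

lemma tsum_gg_eq : (fun z : ℝ => ∑' v : ℕ, gg v z) = (fun z : ℝ => z^2 * trigamma z) := by
  funext z
  rw [trigamma, ← tsum_mul_left]
  congr 1
  funext v
  rw [gg, mul_one_div]

lemma convex_xsq_trigamma : ConvexOn ℝ (Set.Ioi 0) (fun x : ℝ => x^2 * trigamma x) := by
  rw [← tsum_gg_eq]
  apply convexOn_of_hasDerivWithinAt2_nonneg (convex_Ioi 0)
    (f' := fun x => ∑' v : ℕ, gg1 v x) (f'' := fun x => ∑' v : ℕ, gg2 v x)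
  · intro x hx
    exact (hasDerivAt_F1 x hx).continuousAt.continuousWithinAt
  · intro x hx
    rw [interior_Ioi] at hx ⊢
    exact (hasDerivAt_F1 x hx).hasDerivWithinAt
  · intro x hx
    rw [interior_Ioi] at hx ⊢
    exact (hasDerivAt_F2 x hx).hasDerivWithinAt
  · intro x hx
    rw [interior_Ioi] at hx
    exact f2_nonneg x hx

theorem stmt_15 (m : ℕ) (hm : 1 ≤ m) (T Δt α : ℝ) (hT : 0 < T) (hΔt : 0 < Δt)
    (hfeas : (m : ℝ) * Δt ≤ T) (hα : 0 < α)
    (t : Fin m → ℝ) (ht : ∀ j, Δt ≤ t j) (hsum : ∑ j, t j = T) :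
    (∑ j : Fin m, (α * (T / m)) ^ 2 * trigamma (α * (T / m))) ≤
        ∑ j, (α * t j) ^ 2 * trigamma (α * t j) ∧
    ∀ σ : Equiv.Perm (Fin m),
      (∑ j, (α * t j) ^ 2 * trigamma (α * t j)) ≤
        ∑ j : Fin m,
          (α * (if σ j = ⟨0, hm⟩ then T - (m - 1) * Δt else Δt)) ^ 2 *
            trigamma (α * (if σ j = ⟨0, hm⟩ then T - (m - 1) * Δt else Δt)) := by
  have hm0 : (0:ℝ) < m := by exact_mod_cast Nat.pos_of_ne_zero (by omega)
  set F : ℝ → ℝ := fun y => y^2 * trigamma y with hF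
  have hconv := convex_xsq_trigamma
  have htpos : ∀ j, 0 < t j := fun j => lt_of_lt_of_le hΔt (ht j)
  constructor
  · -- minimum : Jensen
    have hJ := hconv.map_sum_le (t := Finset.univ) (w := fun _ : Fin m => (m:ℝ)⁻¹)
      (p := fun j => α * t j) (fun j _ => by positivity)
      (by rw [Finset.sum_const, Finset.card_univ, Fintype.card_fin, nsmul_eq_mul]
          field_simp)
      (fun j _ => mem_Ioi.2 (mul_pos hα (htpos j)))
    simp only [smul_eq_mul] at hJ
    have harg : (∑ i : Fin m, (m:ℝ)⁻¹ * (α * t i)) = α * (T / m) := by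
      rw [← Finset.mul_sum, ← Finset.mul_sum, hsum]
      field_simp
    rw [harg, ← Finset.mul_sum] at hJ
    set S := ∑ j : Fin m, (α * t j)^2 * trigamma (α * t j) with hS
    have hgoalL : (∑ _j : Fin m, (α * (T/m))^2 * trigamma (α * (T/m)))
        = (m:ℝ) * ((α * (T/m))^2 * trigamma (α * (T/m))) := by
      rw [Finset.sum_const, Finset.card_univ, Fintype.card_fin, nsmul_eq_mul]
    rw [hgoalL]
    have h2 := mul_le_mul_of_nonneg_left hJ hm0.le
    have h3 : (m:ℝ) * ((m:ℝ)⁻¹ * S) = S := by field_simp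
    linarith
  · intro σ
    set A : ℝ := T - ((m:ℝ) - 1) * Δt with hA
    have hAz : Δt ≤ A := by
      rw [hA]; nlinarith
    have hApos : 0 < A := lt_of_lt_of_le hΔt hAz
    have hR : (∑ j : Fin m, F (α * (if σ j = ⟨0, hm⟩ then A else Δt)))
        = F (α*A) + ((m:ℝ) - 1) * F (α*Δt) := by
      rw [Equiv.sum_comp σ (fun i => F (α * (if i = ⟨0, hm⟩ then A else Δt)))]
      have hsplit : ∀ i : Fin m, F (α * (if i = ⟨0, hm⟩ then A else Δt))
          = F (α*Δt) + (if i = ⟨0, hm⟩ then F (α*A) - F (α*Δt) else 0) := by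
        intro i; split_ifs <;> ring
      rw [Finset.sum_congr rfl (fun i _ => hsplit i), Finset.sum_add_distrib]
      simp only [Finset.sum_ite_eq', Finset.mem_univ, if_true, Finset.sum_const,
        Finset.card_univ, Fintype.card_fin, nsmul_eq_mul]
      ring
    show (∑ j, F (α * t j)) ≤ _
    rw [hR]
    rcases eq_or_lt_of_le hfeas with hD | hD
    · -- T = m Δt : everything equal
      have hsumz : ∑ j, (t j - Δt) = 0 := by
        rw [Finset.sum_sub_distrib, hsum, Finset.sum_const, Finset.card_univ,
          Fintype.card_fin, nsmul_eq_mul]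
        linarith
      have hall : ∀ j, t j = Δt := by
        intro j
        have h := (Finset.sum_eq_zero_iff_of_nonneg
          (fun i _ => sub_nonneg.2 (ht i))).1 hsumz j (Finset.mem_univ j)
        linarith
      have hAeq : A = Δt := by rw [hA]; nlinarith
      have : (∑ j, F (α * t j)) = (m:ℝ) * F (α * Δt) := by
        rw [Finset.sum_congr rfl (fun j _ => by rw [hall j])]
        simp [Finset.sum_const, Finset.card_univ, nsmul_eq_mul]
      rw [this, hAeq]
      linarith
    · -- T > m Δt
      set D : ℝ := T - (m:ℝ) * Δt with hDdef
      have hDpos : 0 < D := by rw [hDdef]; linarith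
      have hdsum : ∑ j, (t j - Δt) = D := by
        rw [Finset.sum_sub_distrib, hsum, Finset.sum_const, Finset.card_univ,
          Fintype.card_fin, nsmul_eq_mul, hDdef]
      have hdle : ∀ j, t j - Δt ≤ D := by
        intro j
        rw [← hdsum]
        exact Finset.single_le_sum (fun i _ => sub_nonneg.2 (ht i)) (Finset.mem_univ j)
      have hkey : ∀ j, F (α * t j) ≤
          (1 - (t j - Δt)/D) * F (α*Δt) + ((t j - Δt)/D) * F (α*A) := by
        intro j
        have hl1 : 0 ≤ (t j - Δt)/D := div_nonneg (sub_nonneg.2 (ht j)) hDpos.le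
        have hl2 : 0 ≤ 1 - (t j - Δt)/D := by
          rw [sub_nonneg, div_le_one hDpos]
          exact hdle j
        have hcomb : (1 - (t j - Δt)/D) • (α*Δt) + ((t j - Δt)/D) • (α*A) = α * t j := by
          simp only [smul_eq_mul]
          field_simp
          rw [hA, hDdef]
          ring
        have := hconv.2 (mem_Ioi.2 (mul_pos hα hΔt)) (mem_Ioi.2 (mul_pos hα hApos))
          hl2 hl1 (by ring)
        rw [hcomb] at this
        simpa using this
      calc (∑ j, F (α * t j))
          ≤ ∑ j, ((1 - (t j - Δt)/D) * F (α*Δt) + ((t j - Δt)/D) * F (α*A)) :=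
            Finset.sum_le_sum (fun j _ => hkey j)
        _ = F (α*A) + ((m:ℝ) - 1) * F (α*Δt) := by
            have hfrac : ∑ j, (t j - Δt)/D = 1 := by
              rw [← Finset.sum_div, hdsum, div_self hDpos.ne']
            have hexp : ∀ j : Fin m, (1 - (t j - Δt)/D) * F (α*Δt) + ((t j - Δt)/D) * F (α*A)
                = F (α*Δt) + ((t j - Δt)/D) * (F (α*A) - F (α*Δt)) := by
              intro j; ring
            rw [Finset.sum_congr rfl (fun j _ => hexp j), Finset.sum_add_distrib,
              Finset.sum_const, Finset.card_univ, Fintype.card_fin, nsmul_eq_mul,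
              ← Finset.sum_mul, hfrac]
            ring
end

section
/- Fix α > 0, Δt > 0, and T > 0 with T/Δt ≥ 1. The function g₂(m) = (m−1)(αΔt)²·ψ₁(αΔt) + (α(T − (m−1)Δt))²·ψ₁(α(T − (m−1)Δt)) is strictly increasing in m on the interval [1, T/Δt]; in particular its maximum over this interval is attained at m = T/Δt. -/
open Set Filter Finset


lemma sq_summable {x : ℝ} (hx : 0 < x) : Summable (fun v : ℕ => 1 / (x + v) ^ 2) := by
  have hc : 0 < min x 1 := lt_min hx one_pos
  have h1 : Summable (fun v : ℕ => 1 / ((v:ℝ) + 1) ^ 2) := by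
    have := (summable_nat_add_iff (f := fun n : ℕ => 1 / (n:ℝ) ^ 2) 1).2
      (Real.summable_one_div_nat_pow.2 one_lt_two)
    convert this using 2 with v
    · rfl
    · push_cast; ring
  refine Summable.of_nonneg_of_le (fun v => by positivity)
    (fun v => ?_) (h1.mul_left ((min x 1)^2)⁻¹)
  have hxv : 0 < x + v := by positivity
  have hv1 : 0 < (v:ℝ) + 1 := by positivity
  have key : min x 1 * ((v:ℝ) + 1) ≤ x + v := by
    have h1 : min x 1 ≤ x := min_le_left _ _
    have h2 : min x 1 ≤ 1 := min_le_right _ _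
    nlinarith [Nat.cast_nonneg (α := ℝ) v]
  have h2 : (min x 1 * ((v:ℝ) + 1))^2 ≤ (x + v)^2 := by
    apply pow_le_pow_left₀ (by positivity) key
  have h3 : 1 / (x+v)^2 ≤ 1 / (min x 1 * ((v:ℝ) + 1))^2 :=
    one_div_le_one_div_of_le (by positivity) h2
  calc 1 / (x+v)^2 ≤ 1 / (min x 1 * ((v:ℝ) + 1))^2 := h3
    _ = ((min x 1)^2)⁻¹ * (1 / ((v:ℝ)+1)^2) := by
        rw [mul_pow]; field_simp

lemma cube_summable {x : ℝ} (hx : 0 < x) : Summable (fun v : ℕ => 1 / (x + v) ^ 3) := by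
  refine Summable.of_nonneg_of_le (fun v => by positivity)
    (fun v => ?_) ((sq_summable hx).mul_left x⁻¹)
  have hxv : 0 < x + v := by positivity
  have h1 : 1 / (x+v)^3 = (1/(x+v)) * (1/(x+v)^2) := by
    field_simp
  rw [h1]
  have : 1/(x+v) ≤ x⁻¹ := by
    rw [one_div]
    apply inv_anti₀ hx (by simp [Nat.cast_nonneg])
  apply mul_le_mul_of_nonneg_right this (by positivity)

lemma trigamma_lower {x : ℝ} (hx : 0 < x) : 1/x + 1/(2*x^2) < trigamma x := by
  set f : ℕ → ℝ := fun v => 1 / (x + v) ^ 2 with hf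
  set Tl : ℕ → ℝ := fun v => 1/(x+v) - 1/(x+(v+1:ℕ)) with hTl
  have hxv : ∀ v : ℕ, 0 < x + v := fun v => by positivity
  -- Tl is nonneg and ≤ f
  have hTnonneg : ∀ v, 0 ≤ Tl v := by
    intro v
    have h1 : (0:ℝ) < x + v := hxv v
    have h2 : x + (v:ℝ) ≤ x + ((v+1:ℕ):ℝ) := by push_cast; linarith
    simp only [hTl, sub_nonneg]
    exact one_div_le_one_div_of_le h1 h2
  have hTle : ∀ v, Tl v ≤ f v := by
    intro v
    have h1 : (0:ℝ) < x + v := hxv v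
    simp only [hTl, hf]
    rw [div_sub_div _ _ (ne_of_gt h1) (ne_of_gt (hxv (v+1)))]
    push_cast
    rw [div_le_div_iff₀ (by nlinarith) (by positivity)]
    nlinarith
  have hTsummable : Summable Tl :=
    Summable.of_nonneg_of_le hTnonneg hTle (sq_summable hx)
  -- telescoping value
  have hTsum : ∑' v, Tl v = 1/x := by
    have hps : ∀ n : ℕ, ∑ v ∈ range n, Tl v = 1/x - 1/(x+n) := by
      intro n
      have := Finset.sum_range_sub' (f := fun v : ℕ => 1/(x + v)) n
      simpa [hTl] using this
    have hlim : Tendsto (fun n : ℕ => 1/x - 1/(x + n)) atTop (nhds (1/x - 0)) := by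
      apply Tendsto.const_sub
      simp only [one_div]
      apply Tendsto.inv_tendsto_atTop
      exact tendsto_atTop_add_const_left _ x tendsto_natCast_atTop_atTop
    have h2 := hTsummable.hasSum.tendsto_sum_nat
    have h3 : Tendsto (fun n : ℕ => ∑ v ∈ range n, Tl v) atTop (nhds (1/x - 0)) := by
      simpa only [hps] using hlim
    have := tendsto_nhds_unique h2 h3
    rw [this]; ring
  -- average sum
  have hfs := sq_summable hx
  have hfs1 : Summable (fun v : ℕ => f (v+1)) := (summable_nat_add_iff 1).2 hfs
  have havg_summable : Summable (fun v => (f v + f (v+1))/2) := by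
    apply Summable.div_const
    exact hfs.add hfs1
  have havg : ∑' v, (f v + f (v+1))/2 = trigamma x - 1/(2*x^2) := by
    have h1 : ∑' v, (f v + f (v+1))/2 = ((∑' v, f v) + ∑' v, f (v+1))/2 := by
      rw [← Summable.tsum_add hfs hfs1, tsum_div_const]
    have h2 : ∑' v, f v = f 0 + ∑' v, f (v+1) := Summable.tsum_eq_zero_add hfs
    have h3 : (∑' v, f v) = trigamma x := rfl
    have hf0 : f 0 = 1/x^2 := by simp [hf]
    rw [h1, ← h3]
    rw [h2]
    rw [hf0]
    ring
  -- strict termwise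
  have key : ∀ a : ℝ, 0 < a → 1/a - 1/(a+1) < (1/a^2 + 1/(a+1)^2)/2 := by
    intro a ha
    have h1 : (0:ℝ) < a + 1 := by linarith
    rw [div_sub_div _ _ (ne_of_gt ha) (ne_of_gt h1)]
    rw [div_add_div _ _ (by positivity) (by positivity), div_div]
    rw [div_lt_div_iff₀ (by positivity) (by positivity)]
    nlinarith [sq_nonneg (a*(a+1)), sq_nonneg a, sq_nonneg (a+1), mul_pos ha h1]
  have hstrict : ∀ v, Tl v < (f v + f (v+1))/2 := by
    intro v
    have h1 : (0:ℝ) < x + v := hxv v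
    have hb : x + ((v+1:ℕ):ℝ) = (x + v) + 1 := by push_cast; ring
    simp only [hTl, hf, hb]
    exact key _ h1
  have := Summable.tsum_lt_tsum (f := Tl) (g := fun v => (f v + f (v+1))/2)
    (fun v => le_of_lt (hstrict v)) (hstrict 0) hTsummable havg_summable
  rw [hTsum, havg] at this
  linarith


lemma g_fact (t a b : ℝ) : b*(t+a)^3 - a*(t+b)^3 = (b-a)*(t^3 - 3*t*a*b - a*b*(a+b)) := by ring

lemma g_mono_inc {t : ℝ} (ht : 0 < t) {a b : ℝ} (ha : 0 ≤ a) (hab : a ≤ b) (hb : b ≤ t/2) :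
    2*t*a/(t+a)^3 ≤ 2*t*b/(t+b)^3 := by
  have h1 : (0:ℝ) < (t+a)^3 := by apply pow_pos; linarith
  have h2 : (0:ℝ) < (t+b)^3 := by apply pow_pos; linarith
  rw [div_le_div_iff₀ h1 h2]
  have hb0 : 0 ≤ b := le_trans ha hab
  have hab2 : a*b ≤ t^2/4 := by nlinarith
  have hsum : a + b ≤ t := by linarith
  have key : 0 ≤ (b-a)*(t^3 - 3*t*a*b - a*b*(a+b)) := by
    apply mul_nonneg (by linarith)
    nlinarith [mul_nonneg ha hb0]
  rw [← g_fact t a b] at key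
  nlinarith [mul_nonneg ht.le key]

lemma g_mono_dec {t : ℝ} (ht : 0 < t) {a b : ℝ} (ha : t/2 ≤ a) (hab : a ≤ b) :
    2*t*b/(t+b)^3 ≤ 2*t*a/(t+a)^3 := by
  have ha0 : 0 ≤ a := le_trans (by positivity) ha
  have hb0 : 0 ≤ b := le_trans ha0 hab
  have h1 : (0:ℝ) < (t+a)^3 := by apply pow_pos; linarith
  have h2 : (0:ℝ) < (t+b)^3 := by apply pow_pos; linarith
  rw [div_le_div_iff₀ h2 h1]
  have hab2 : t^2/4 ≤ a*b := by nlinarith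
  have hsum : t ≤ a + b := by linarith
  have key : (b-a)*(t^3 - 3*t*a*b - a*b*(a+b)) ≤ 0 := by
    apply mul_nonpos_of_nonneg_of_nonpos (by linarith)
    nlinarith [mul_nonneg ha0 hb0]
  rw [← g_fact t a b] at key
  nlinarith [mul_nonneg ht.le (neg_nonneg.2 key)]

lemma g_max {t : ℝ} (ht : 0 < t) {s : ℝ} (hs : 0 ≤ s) :
    2*t*s/(t+s)^3 ≤ 8/(27*t) := by
  have h1 : (0:ℝ) < (t+s)^3 := by apply pow_pos; linarith
  rw [div_le_div_iff₀ h1 (by positivity)]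
  nlinarith [mul_nonneg (sq_nonneg (2*s-t)) hs,
    mul_nonneg (sq_nonneg (2*s-t)) ht.le]

lemma g_half {t : ℝ} (ht : 0 < t) : 2*t*(t/2)/(t+t/2)^3 = 8/(27*t) := by
  field_simp
  ring

noncomputable def gf (t s : ℝ) : ℝ := 2*t*s/(t+s)^3
noncomputable def Af (t s : ℝ) : ℝ := s^2/(t+s)^2
noncomputable def Mf (t s : ℝ) : ℝ := gf t (min s (t/2))


lemma hasDerivAt_Af {t : ℝ} (ht : 0 < t) {s : ℝ} (hs : 0 ≤ s) :
    HasDerivAt (Af t) (gf t s) s := by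
  have hts : t + s ≠ 0 := by positivity
  have h1 : HasDerivAt (fun s : ℝ => s^2) (2*s) s := by
    simpa using hasDerivAt_pow 2 s
  have h2 : HasDerivAt (fun s : ℝ => (t+s)^2) (2*(t+s)) s := by
    have := ((hasDerivAt_id s).const_add t).pow 2
    simpa [Pi.pow_def] using this
  have h3 := h1.div h2 (by positivity)
  have : (2*s * (t+s)^2 - s^2 * (2*(t+s))) / ((t+s)^2)^2 = gf t s := by
    unfold gf
    field_simp
    ring
  rw [this] at h3
  exact h3

lemma pointwise_claim {t : ℝ} (ht : 0 < t) {a s : ℝ} (ha : 0 ≤ a)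
    (hs1 : a ≤ s) (hs2 : s ≤ a + 1) :
    gf t (a+1) ≤ gf t s + (Mf t (a+1) - Mf t a) := by
  have ht2 : 0 ≤ t/2 := by positivity
  rcases le_or_gt (a+1) (t/2) with h1 | h1
  · -- increasing region
    rw [Mf, Mf, min_eq_left h1, min_eq_left (by linarith)]
    have : gf t a ≤ gf t s := g_mono_inc ht ha hs1 (by linarith)
    unfold gf at *
    linarith
  · rcases le_or_gt (t/2) a with h2 | h2
    · -- decreasing region
      rw [Mf, Mf, min_eq_right (by linarith), min_eq_right h2]
      have : gf t (a+1) ≤ gf t s := g_mono_dec ht (le_trans h2 hs1) hs2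
      unfold gf at *
      linarith
    · -- middle
      rw [Mf, Mf, min_eq_right (le_of_lt h1), min_eq_left (le_of_lt h2)]
      have hM : gf t (t/2) = 8/(27*t) := g_half ht
      rcases le_or_gt s (t/2) with h3 | h3
      · have e1 : gf t (a+1) ≤ 8/(27*t) := g_max ht (by linarith)
        have e2 : gf t a ≤ gf t s := g_mono_inc ht ha hs1 h3
        unfold gf at *
        linarith
      · have e1 : gf t (a+1) ≤ gf t s := g_mono_dec ht (le_of_lt h3) hs2
        have e2 : gf t a ≤ 8/(27*t) := g_max ht ha
        unfold gf at *
        linarith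

lemma interval_step {t : ℝ} (ht : 0 < t) {a : ℝ} (ha : 0 ≤ a) :
    gf t (a+1) ≤ (Af t (a+1) - Af t a) + (Mf t (a+1) - Mf t a) := by
  have hcont : ContinuousOn (Af t) (Icc a (a+1)) := by
    intro z hz
    exact ((hasDerivAt_Af ht (le_trans ha hz.1)).continuousAt).continuousWithinAt
  have hderiv : ∀ z ∈ Ioo a (a+1), HasDerivAt (Af t) (gf t z) z := by
    intro z hz
    exact hasDerivAt_Af ht (le_trans ha hz.1.le)
  obtain ⟨ξ, hξ, hslope⟩ := exists_hasDerivAt_eq_slope (Af t) (gf t)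
    (lt_add_one a) hcont hderiv
  have hAa : Af t (a+1) - Af t a = gf t ξ := by
    rw [hslope]; simp
  rw [hAa]
  exact pointwise_claim ht ha hξ.1.le hξ.2.le

lemma partial_bound {t : ℝ} (ht : 0 < t) (n : ℕ) :
    ∑ v ∈ range (n+1), gf t v ≤ Af t n + Mf t n := by
  induction n with
  | zero =>
    simp only [range_one, sum_singleton, Nat.cast_zero]
    rw [Mf, min_eq_left (by positivity)]
    unfold gf Af
    simp
  | succ n ih =>
    rw [sum_range_succ]
    have hstep := interval_step ht (t := t) (a := (n:ℝ)) (Nat.cast_nonneg n)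
    push_cast
    push_cast at ih hstep
    linarith

lemma tsum_g_bound {t : ℝ} (ht : 0 < t) :
    ∑' v : ℕ, 2*t*(v:ℝ)/(t+v)^3 ≤ 1 + 8/(27*t) := by
  apply Real.tsum_le_of_sum_range_le
  · intro v
    have : (0:ℝ) < (t+v)^3 := by positivity
    positivity
  · intro n
    match n with
    | 0 => simp; positivity
    | (n+1) =>
      have h1 := partial_bound ht n
      have h2 : Af t n ≤ 1 := by
        rw [Af, div_le_one (by positivity)]
        have : (0:ℝ) ≤ (n:ℝ) := Nat.cast_nonneg n
        nlinarith
      have h3 : Mf t n ≤ 8/(27*t) := by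
        rw [Mf]
        exact g_max ht (le_min (Nat.cast_nonneg n) (by positivity))
      have : ∑ v ∈ range (n+1), gf t v ≤ 1 + 8/(27*t) := by linarith
      calc ∑ v ∈ range (n+1), 2*t*(v:ℝ)/(t+v)^3 = ∑ v ∈ range (n+1), gf t v := by
            apply Finset.sum_congr rfl; intro v _; rfl
        _ ≤ 1 + 8/(27*t) := this

lemma hasDerivAt_trigamma {y : ℝ} (hy : 0 < y) :
    HasDerivAt trigamma (tetragamma y) y := by
  have hy2 : 0 < y/2 := by positivity
  have key := hasDerivAt_tsum_of_isPreconnected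
    (F := ℝ) (𝕜 := ℝ)
    (u := fun n : ℕ => 2 * (1 / (y/2 + n)^3))
    (t := Ioi (y/2))
    (g := fun (n : ℕ) (z : ℝ) => 1 / (z + n) ^ 2)
    (g' := fun (n : ℕ) (z : ℝ) => -2 / (z + n) ^ 3)
    (y₀ := y) (y := y)
    ((cube_summable hy2).mul_left 2)
    isOpen_Ioi (isPreconnected_Ioi)
    ?_ ?_ (by simp [hy2, Set.mem_Ioi]; linarith) (sq_summable hy) (by simp [Set.mem_Ioi]; linarith)
  · have h2 : (∑' n : ℕ, -2 / (y + n)^3) = tetragamma y := by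
      rw [tetragamma, ← tsum_mul_left]
      apply tsum_congr
      intro n
      ring
    rw [h2] at key
    exact key
  · intro n z hz
    have hzn : 0 < z + n := by
      have : (0:ℝ) ≤ (n:ℝ) := Nat.cast_nonneg n
      simp only [Set.mem_Ioi] at hz
      linarith
    have h1 : HasDerivAt (fun z : ℝ => (z + n)^2) (2*(z+n)) z := by
      have := ((hasDerivAt_id z).add_const (n:ℝ)).pow 2
      simpa [Pi.pow_def] using this
    have h2 := h1.inv (by positivity)
    have e : -(2*(z+n)) / ((z+n)^2)^2 = -2/(z+n)^3 := by
      field_simp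
    rw [e] at h2
    simpa [one_div, Pi.inv_def] using h2
  · intro n z hz
    simp only [Set.mem_Ioi] at hz
    have hzn : 0 < z + n := by
      have : (0:ℝ) ≤ (n:ℝ) := Nat.cast_nonneg n
      linarith
    have hyn : 0 < y/2 + n := by
      have : (0:ℝ) ≤ (n:ℝ) := Nat.cast_nonneg n
      linarith
    show ‖-2 / (z + n)^3‖ ≤ 2 * (1 / (y/2 + n)^3)
    rw [mul_one_div, Real.norm_eq_abs, abs_div, abs_neg, abs_two, abs_pow, abs_of_pos hzn]
    apply div_le_div_of_nonneg_left (by norm_num) (by positivity)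
    apply pow_le_pow_left₀ hyn.le (by linarith)

lemma Fderiv_eq {t : ℝ} (ht : 0 < t) :
    2*t*trigamma t + t^2*tetragamma t = ∑' v : ℕ, 2*t*(v:ℝ)/(t+v)^3 := by
  have hs2 := sq_summable ht
  have hs3 := cube_summable ht
  rw [trigamma, tetragamma]
  rw [← tsum_mul_left, ← tsum_mul_left, ← tsum_mul_left]
  rw [← Summable.tsum_add (hs2.mul_left (2*t)) ((hs3.mul_left (-2)).mul_left (t^2))]
  apply tsum_congr
  intro v
  have hv : 0 < t + v := by positivity
  field_simp
  ring


lemma Fprime_lt {x y : ℝ} (hx : 0 < x) (hy : x ≤ y) :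
    2*y*trigamma y + y^2*tetragamma y < x * trigamma x := by
  have hy0 : 0 < y := lt_of_lt_of_le hx hy
  have h1 : 2*y*trigamma y + y^2*tetragamma y ≤ 1 + 8/(27*y) := by
    rw [Fderiv_eq hy0]; exact tsum_g_bound hy0
  have h2 : 8/(27*y) ≤ 8/(27*x) := by
    apply div_le_div_of_nonneg_left (by norm_num) (by positivity)
    linarith
  have h3 : 8/(27*x) < 1/(2*x) := by
    rw [div_lt_div_iff₀ (by positivity) (by positivity)]
    nlinarith
  have h4 : 1 + 1/(2*x) < x * trigamma x := by
    have h5 := trigamma_lower hx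
    have h6 : x * (1/x + 1/(2*x^2)) < x * trigamma x :=
      mul_lt_mul_of_pos_left h5 hx
    have h7 : x * (1/x + 1/(2*x^2)) = 1 + 1/(2*x) := by
      field_simp
    linarith
  linarith

theorem stmt_16 (α Δt T : ℝ) (hα : 0 < α) (hΔt : 0 < Δt) (hT : 0 < T)
    (h : 1 ≤ T / Δt) :
    StrictMonoOn
      (fun m : ℝ =>
        (m - 1) * (α * Δt) ^ 2 * trigamma (α * Δt) +
          (α * (T - (m - 1) * Δt)) ^ 2 * trigamma (α * (T - (m - 1) * Δt)))
      (Set.Icc 1 (T / Δt)) ∧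
    ∀ m ∈ Set.Icc (1 : ℝ) (T / Δt),
      (m - 1) * (α * Δt) ^ 2 * trigamma (α * Δt) +
          (α * (T - (m - 1) * Δt)) ^ 2 * trigamma (α * (T - (m - 1) * Δt)) ≤
        (T / Δt - 1) * (α * Δt) ^ 2 * trigamma (α * Δt) +
          (α * (T - (T / Δt - 1) * Δt)) ^ 2 * trigamma (α * (T - (T / Δt - 1) * Δt)) := by
  have hx : 0 < α * Δt := mul_pos hα hΔt
  set Φ : ℝ → ℝ := fun m : ℝ =>
        (m - 1) * (α * Δt) ^ 2 * trigamma (α * Δt) +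
          (α * (T - (m - 1) * Δt)) ^ 2 * trigamma (α * (T - (m - 1) * Δt)) with hΦ
  set y : ℝ → ℝ := fun m : ℝ => α * (T - (m - 1) * Δt) with hy
  -- x ≤ y m for m ≤ T/Δt
  have hyx : ∀ m : ℝ, m ≤ T / Δt → α * Δt ≤ y m := by
    intro m hm
    have h1 : m * Δt ≤ T := (le_div_iff₀ hΔt).1 hm
    have h2 : (0:ℝ) ≤ α * (T - m * Δt) := mul_nonneg hα.le (by linarith)
    simp only [hy]
    nlinarith
  -- derivative of Φ
  have hderivAt : ∀ m : ℝ, 0 < y m →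
      HasDerivAt Φ ((α*Δt)^2 * trigamma (α*Δt)
        + (2*(y m)*trigamma (y m) + (y m)^2 * tetragamma (y m)) * (-(α*Δt))) m := by
    intro m hym
    have hy1 : HasDerivAt y (-(α*Δt)) m := by
      have h1 : HasDerivAt (fun m : ℝ => (m - 1) * Δt) Δt m := by
        simpa using ((hasDerivAt_id m).sub_const 1).mul_const Δt
      have h2 := (h1.const_sub T).const_mul α
      simpa [hy] using h2
    have hG : HasDerivAt (fun t : ℝ => t^2 * trigamma t)
        (2*(y m)*trigamma (y m) + (y m)^2 * tetragamma (y m)) (y m) := by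
      have := (hasDerivAt_pow 2 (y m)).mul (hasDerivAt_trigamma hym)
      simpa [pow_one, Pi.mul_def] using this
    have hcomp := hG.comp m hy1
    have hlin : HasDerivAt (fun m : ℝ => (m - 1) * ((α*Δt)^2 * trigamma (α*Δt)))
        ((α*Δt)^2 * trigamma (α*Δt)) m := by
      simpa using ((hasDerivAt_id m).sub_const 1).mul_const ((α*Δt)^2 * trigamma (α*Δt))
    have hsum := hlin.add hcomp
    have heq : Φ = fun m : ℝ => (m - 1) * ((α*Δt)^2 * trigamma (α*Δt))
        + ((fun t : ℝ => t^2 * trigamma t) ∘ y) m := by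
      funext m
      simp only [hΦ, hy, Function.comp]
      ring
    rw [heq]
    exact hsum
  have hpos : ∀ m : ℝ, m ≤ T / Δt → 0 < y m :=
    fun m hm => lt_of_lt_of_le hx (hyx m hm)
  -- strict monotonicity
  have hmono : StrictMonoOn Φ (Set.Icc 1 (T / Δt)) := by
    apply strictMonoOn_of_deriv_pos (convex_Icc _ _)
    · intro m hm
      exact ((hderivAt m (hpos m hm.2)).continuousAt).continuousWithinAt
    · intro m hm
      rw [interior_Icc] at hm
      rw [(hderivAt m (hpos m hm.2.le)).deriv]
      have hkey := Fprime_lt hx (hyx m hm.2.le)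
      nlinarith [mul_pos hx (sub_pos.2 hkey)]
  refine ⟨hmono, ?_⟩
  intro m hm
  have hmem : T / Δt ∈ Set.Icc (1:ℝ) (T / Δt) := ⟨h, le_refl _⟩
  rcases eq_or_lt_of_le hm.2 with heq | hlt
  · rw [heq]
  · exact le_of_lt (hmono hm hmem hlt)
end
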